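/- arXiv:1507.00148 — 2 statements merged into one kernel-verified Lean document; each statement's English description precedes it below -/
import Mathlib

section
/- Let n ≥ 1 and let w = c₂e₂ + c₃e₃ + ⋯ + c_{n+2}e_{n+2} be an element of the elementary filiform Lie algebra f_{n+2} with c₂ ≠ 0. Then the Lie subalgebra of f_{n+2} generated by the two elements e₁ and w is all of f_{n+2}. -/
/-!
`ad e₁` acts on `e₂, …, e_{n+2}` as a weighted shift with weights `n, n-1, …, 1, 0`, so
`(ad e₁)^k w = c₂ n (n-1) ⋯ (n-k+1) e_{k+2} + (terms in e_{k+3}, …, e_{n+2})`.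
These vectors lie in the subalgebra generated by `e₁` and `w` and form a triangular system with
nonzero diagonal; solving it from `e_{n+2}` downwards puts every `eᵢ` in that subalgebra.
-/

open Submodule

section TailSpan

variable (R : Type*) {M : Type*} [Semiring R] [AddCommMonoid M] [Module R M]

def tailSpan (e : ℕ → M) (k : ℕ) : Submodule R M :=
  span R (e '' Set.Ici k)

variable {R} {e : ℕ → M}

theorem mem_tailSpan {k i : ℕ} (h : k ≤ i) : e i ∈ tailSpan R e k :=
  subset_span ⟨i, h, rfl⟩

theorem tailSpan_le_of_forall_mem_sup {S : Submodule R M} {m : ℕ} (hm : ∀ k, m ≤ k → e k = 0)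
    (h : ∀ k < m, e k ∈ S ⊔ tailSpan R e (k + 1)) (j : ℕ) : tailSpan R e j ≤ S := by
  induction hd : m - j generalizing j with
  | zero =>
    refine span_le.mpr ?_
    rintro _ ⟨i, hi, rfl⟩
    simp [hm i (by simp only [Set.mem_Ici] at hi; omega)]
  | succ d ih =>
    have hS : tailSpan R e (j + 1) ≤ S := ih (j + 1) (by omega)
    refine span_le.mpr ?_
    rintro _ ⟨i, hi, rfl⟩
    rcases (Set.mem_Ici.mp hi).eq_or_lt with rfl | hlt
    · exact sup_le le_rfl hS (h j (by omega))
    · exact hS (mem_tailSpan hlt)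

end TailSpan

theorem mem_sup_of_sub_smul_mem {K M : Type*} [DivisionRing K] [AddCommGroup M] [Module K M]
    {S T : Submodule K M} {v y : M} {a : K} (hv : v ∈ S) (ha : a ≠ 0) (h : v - a • y ∈ T) :
    y ∈ S ⊔ T := by
  have : a • y ∈ S ⊔ T := by
    simpa using sub_mem (mem_sup_left hv : v ∈ S ⊔ T) (mem_sup_right h)
  simpa [ha] using smul_mem _ a⁻¹ this

section WeightedShift

variable {K L : Type*} [CommRing K] [LieRing L] [LieAlgebra K L] {x : L} {E : ℕ → L} {b : ℕ → K}

theorem lie_mem_tailSpan_succ (hshift : ∀ j, 1 ≤ j → ⁅x, E j⁆ = b j • E (j + 1)) {k : ℕ}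
    (hk : 1 ≤ k) {v : L} (hv : v ∈ tailSpan K E k) : ⁅x, v⁆ ∈ tailSpan K E (k + 1) := by
  suffices tailSpan K E k ≤ (tailSpan K E (k + 1)).comap (LieAlgebra.ad K L x) from this hv
  refine span_le.mpr ?_
  rintro _ ⟨i, hi, rfl⟩
  simp only [Set.mem_Ici] at hi
  simp only [SetLike.mem_coe, mem_comap, LieAlgebra.ad_apply, hshift i (hk.trans hi)]
  exact smul_mem _ _ (mem_tailSpan (by omega))

theorem iterate_lie_sub_smul_mem_tailSpan (hshift : ∀ j, 1 ≤ j → ⁅x, E j⁆ = b j • E (j + 1))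
    {w : L} {c : K} (hw : w - c • E 1 ∈ tailSpan K E 2) (k : ℕ) :
    (⁅x, ·⁆)^[k] w - (c * ∏ j ∈ Finset.range k, b (j + 1)) • E (k + 1) ∈ tailSpan K E (k + 2) := by
  induction k with
  | zero => simpa using hw
  | succ k ih =>
    have key : (⁅x, ·⁆)^[k + 1] w - (c * ∏ j ∈ Finset.range (k + 1), b (j + 1)) • E (k + 2) =
        ⁅x, (⁅x, ·⁆)^[k] w - (c * ∏ j ∈ Finset.range k, b (j + 1)) • E (k + 1)⁆ := by
      rw [Function.iterate_succ_apply', lie_sub, lie_smul, hshift (k + 1) (by omega),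
        Finset.prod_range_succ, smul_smul, mul_assoc]
    rw [key]
    exact lie_mem_tailSpan_succ hshift (by omega) ih

end WeightedShift

theorem LieSubalgebra.iterate_lie_mem {K L : Type*} [CommRing K] [LieRing L] [LieAlgebra K L]
    (S : LieSubalgebra K L) {x w : L} (hx : x ∈ S) (hw : w ∈ S) (k : ℕ) : (⁅x, ·⁆)^[k] w ∈ S := by
  induction k with
  | zero => exact hw
  | succ k ih => simpa only [Function.iterate_succ_apply'] using S.lie_mem hx ih

section ExtendByZero

variable {M : Type*} [AddCommMonoid M] {n : ℕ} (e : Fin (n + 2) → M)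

theorem extend_val_apply (i : Fin (n + 2)) : Function.extend Fin.val e 0 i = e i :=
  Fin.val_injective.extend_apply e 0 i

theorem extend_val_of_le {k : ℕ} (hk : n + 2 ≤ k) : Function.extend Fin.val e 0 k = 0 :=
  Function.extend_apply' _ _ _ fun ⟨i, hi⟩ => by omega

theorem span_range_le_tailSpan_zero (R : Type*) [Semiring R] [Module R M] :
    span R (Set.range e) ≤ tailSpan R (Function.extend Fin.val e 0) 0 :=
  span_le.mpr <| by
    rintro _ ⟨i, rfl⟩
    exact extend_val_apply e i ▸ mem_tailSpan (Nat.zero_le i)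

end ExtendByZero

theorem sum_sub_smul_mem_tailSpan_two {R M : Type*} [Ring R] [AddCommGroup M] [Module R M] {n : ℕ}
    (e : Fin (n + 2) → M) (c : Fin (n + 2) → R) (hc0 : c 0 = 0) :
    ∑ j, c j • e j - c 1 • Function.extend Fin.val e 0 1 ∈
      tailSpan R (Function.extend Fin.val e 0) 2 := by
  rw [show Function.extend Fin.val e 0 1 = e 1 from extend_val_apply e 1, Fin.sum_univ_succ,
    Fin.sum_univ_succ, hc0, zero_smul, zero_add, Fin.succ_zero_eq_one, add_sub_cancel_left]
  refine sum_mem fun i _ => smul_mem _ _ ?_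
  exact extend_val_apply e i.succ.succ ▸ mem_tailSpan (by simp)


theorem lie_extend_val {K L : Type*} [CommRing K] [LieRing L] [LieAlgebra K L] {n : ℕ}
    {e : Fin (n + 2) → L}
    (hbr : ∀ j : Fin (n + 2), ∀ _h1 : 1 ≤ (j : ℕ), ∀ _h2 : (j : ℕ) ≤ n,
      ⁅e 0, e j⁆ =
        ((n + 1 - (j : ℕ) : ℕ) : K) • e ⟨(j : ℕ) + 1, Nat.succ_lt_succ (Nat.lt_succ_of_le _h2)⟩)
    (hlast : ⁅e 0, e ⟨n + 1, Nat.lt_succ_self _⟩⁆ = 0) (j : ℕ) (hj : 1 ≤ j) :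
    ⁅e 0, Function.extend Fin.val e 0 j⁆ =
      ((n + 1 - j : ℕ) : K) • Function.extend Fin.val e 0 (j + 1) := by
  rcases lt_or_ge j (n + 1) with hjn | hjn
  · rw [extend_val_apply e ⟨j, by omega⟩, hbr ⟨j, by omega⟩ hj (by simp; omega)]
    exact congrArg _ (extend_val_apply e ⟨j + 1, by omega⟩).symm
  · rw [Nat.sub_eq_zero_of_le hjn, Nat.cast_zero, zero_smul]
    rcases hjn.eq_or_lt with rfl | hlt
    · exact (extend_val_apply e ⟨n + 1, by omega⟩).symm ▸ hlast
    · rw [extend_val_of_le e hlt, lie_zero]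

/-- For `n ≥ 1`, let `L` be the elementary filiform Lie algebra `f_{n+2}` over `ℝ`,
given by a basis `e 0, e 1, …, e (n+1)` (corresponding to `e₁, …, e_{n+2}`) with
`⁅e₁, eᵢ⁆ = (n+2−i) e_{i+1}` for `2 ≤ i ≤ n+1` and all other brackets of basis
elements zero.  If `w = c₂ e₂ + ⋯ + c_{n+2} e_{n+2}` with `c₂ ≠ 0`, then the Lie
subalgebra generated by `e₁` and `w` is all of `L`. -/
theorem stmt1
    (n : ℕ)
    (L : Type) [LieRing L] [LieAlgebra ℝ L]
    (e : Fin (n + 2) → L)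
    (hspan : Submodule.span ℝ (Set.range e) = ⊤)
    (hbr : ∀ j : Fin (n + 2), ∀ _h1 : 1 ≤ (j : ℕ), ∀ _h2 : (j : ℕ) ≤ n,
      ⁅e 0, e j⁆ = ((n + 1 - (j : ℕ) : ℕ) : ℝ) • e ⟨(j : ℕ) + 1, by omega⟩)
    (hlast : ⁅e 0, e ⟨n + 1, by omega⟩⁆ = 0)
    (c : Fin (n + 2) → ℝ) (hc0 : c 0 = 0) (hc1 : c 1 ≠ 0)
    (w : L) (hw : w = ∑ j : Fin (n + 2), c j • e j) :
    LieSubalgebra.lieSpan ℝ L {e 0, w} = ⊤ := by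
  set E := Function.extend Fin.val e 0
  set S := LieSubalgebra.lieSpan ℝ L {e 0, w}
  have he0S : e 0 ∈ S := LieSubalgebra.subset_lieSpan (by simp)
  have hwS : w ∈ S := LieSubalgebra.subset_lieSpan (by simp)
  have hdiag : ∀ k < n + 2, E k ∈ S.toSubmodule ⊔ tailSpan ℝ E (k + 1) := by
    rintro (_ | k) hk
    · have hE0 : E 0 = e 0 := extend_val_apply e 0
      exact mem_sup_left (hE0 ▸ he0S)
    · refine mem_sup_of_sub_smul_mem (S.iterate_lie_mem he0S hwS k) ?_
        (iterate_lie_sub_smul_mem_tailSpan (lie_extend_val hbr hlast)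
          (hw ▸ sum_sub_smul_mem_tailSpan_two e c hc0) k)
      refine mul_ne_zero hc1 (Finset.prod_ne_zero_iff.mpr fun j hj => ?_)
      have hjk : j < k := Finset.mem_range.mp hj
      exact Nat.cast_ne_zero.mpr (by omega)
  rw [← LieSubalgebra.toSubmodule_eq_top, eq_top_iff, ← hspan]
  exact (span_range_le_tailSpan_zero e ℝ).trans
    (tailSpan_le_of_forall_mem_sup (fun k hk => extend_val_of_le e hk) hdiag 0)
end

section
/- Let n ≥ 1 and let v₁, …, vₙ : ℝ → ℝ be continuous functions with vᵢ(0) = 0 for all i such that vₙ is non-linear (there is no constant c with vₙ(u) = c·u for all u). Then the subgroup of the permutation group of ℝ × ℝ generated by all left translations λ_a and all right translations ρ_a of ∗ (over all a ∈ ℝ × ℝ) equals the group Mₙ if and only if there exist continuous functions s₁, …, sₙ : ℝ → ℝ such that for all x, u ∈ ℝ: −x·s₁(u) + x²·s₂(u) + ⋯ + (−1)ⁿ·xⁿ·sₙ(u) − x·v₁(u) + x²·v₂(u) + ⋯ + (−1)ⁿ·xⁿ·vₙ(u) = −u·v₁(x) + u²·v₂(x) − u³·v₃(x) + ⋯ +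 (−1)ⁿ·uⁿ·vₙ(x). -/
/-!
Every left or right translation is a shear `(x, y) ↦ (x + c, y + q x)`. For `λ_a` the function
`q` is a polynomial of degree at most `n`; for `ρ_(u,0)` it is `x ↦ Σₖ (-1)ᵏ uᵏ vₖ(x)`, which is
such a polynomial for every `u` exactly when functions `sₖ` as in the statement exist (Lagrange
interpolation makes them continuous). So the generated group lies in `Mₙ` iff the `sₖ` exist.

It remains to see that the left translations alone generate `Mₙ`. The polynomials whose vertical
shears lie in the group form an additive group, stable under `p ↦ p(X + c)` (conjugate by a left
translation) and containing the polynomial of each defect `λ_(a+b,0)⁻¹ λ_(b,0) λ_(a,0)`, whose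
coefficient of `Xⁿ` is `±(vₙ(a) + vₙ(b) - vₙ(a + b))`. As `vₙ` is continuous but not linear, hence
not additive, these coefficients form a connected set containing `0` and a nonzero number, so they generate `ℝ`. Differences
`p(X + c) - p` then produce every coefficient of lower degree.
-/

open Polynomial Finset

namespace Polynomial

section CommRing

variable {R : Type*} [CommRing R]

theorem natDegree_sub_le_of_coeff_eq {p q : R[X]} {m : ℕ} (hp : p.natDegree ≤ m + 1)
    (hq : q.natDegree ≤ m + 1) (h : p.coeff (m + 1) = q.coeff (m + 1)) :
    (p - q).natDegree ≤ m := by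
  rw [natDegree_le_iff_coeff_eq_zero]
  intro j hj
  rw [coeff_sub]
  rcases (Nat.succ_le_of_lt hj).eq_or_lt with rfl | hj
  · rw [h, sub_self]
  · rw [coeff_eq_zero_of_natDegree_lt (hp.trans_lt hj),
      coeff_eq_zero_of_natDegree_lt (hq.trans_lt hj), sub_self]

theorem coeff_taylor_of_natDegree_le {p : R[X]} {m : ℕ} (hp : p.natDegree ≤ m) (c : R) :
    (taylor c p).coeff m = p.coeff m := by
  rcases hp.lt_or_eq with hp | rfl
  · rw [coeff_eq_zero_of_natDegree_lt hp,
      coeff_eq_zero_of_natDegree_lt (by rwa [natDegree_taylor])]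
  · exact coeff_taylor_natDegree c p

theorem coeff_taylor_of_natDegree_le_add_one {p : R[X]} {m : ℕ} (hp : p.natDegree ≤ m + 1)
    (c : R) : (taylor c p).coeff m = p.coeff m + (m + 1) * p.coeff (m + 1) * c := by
  have hdeg : (hasseDeriv m p).natDegree < 2 :=
    (natDegree_hasseDeriv_le p m).trans_lt (by omega)
  rw [taylor_coeff, eval_eq_sum_range' hdeg]
  simp [hasseDeriv_coeff, Finset.sum_range_succ, add_comm 1 m, Nat.choose_succ_self_right]

def topCoeffs (W : AddSubgroup R[X]) (m : ℕ) : AddSubgroup R where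
  carrier := {β | ∃ p ∈ W, p.natDegree ≤ m ∧ p.coeff m = β}
  zero_mem' := ⟨0, W.zero_mem, by simp⟩
  add_mem' := by
    rintro _ _ ⟨p, hpW, hp, rfl⟩ ⟨q, hqW, hq, rfl⟩
    exact ⟨p + q, W.add_mem hpW hqW, natDegree_add_le_of_degree_le hp hq, coeff_add ..⟩
  neg_mem' := by
    rintro _ ⟨p, hpW, hp, rfl⟩
    exact ⟨-p, W.neg_mem hpW, by rwa [natDegree_neg], coeff_neg ..⟩

end CommRing

variable {K : Type*} [Field K] [CharZero K]

theorem topCoeffs_eq_top_of_succ {W : AddSubgroup K[X]} (hW : ∀ c, ∀ p ∈ W, taylor c p ∈ W)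
    {m : ℕ} (hm : topCoeffs W (m + 1) = ⊤) : topCoeffs W m = ⊤ := by
  refine (AddSubgroup.eq_top_iff' _).2 fun β => ?_
  obtain ⟨p, hpW, hp, hp1⟩ := (AddSubgroup.eq_top_iff' _).1 hm 1
  refine ⟨taylor (β / (m + 1)) p - p, W.sub_mem (hW _ p hpW) hpW,
    natDegree_sub_le_of_coeff_eq (by rwa [natDegree_taylor]) hp
      (coeff_taylor_of_natDegree_le hp _), ?_⟩
  rw [coeff_sub, coeff_taylor_of_natDegree_le_add_one hp, hp1]
  field_simp
  ring

theorem mem_of_topCoeffs_eq_top {W : AddSubgroup K[X]} (hW : ∀ c, ∀ p ∈ W, taylor c p ∈ W)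
    {m : ℕ} (hm : topCoeffs W m = ⊤) {q : K[X]} (hq : q.natDegree ≤ m) : q ∈ W := by
  induction m generalizing q with
  | zero =>
    obtain ⟨p, hpW, hp, hpq⟩ := (AddSubgroup.eq_top_iff' _).1 hm (q.coeff 0)
    rwa [eq_C_of_natDegree_le_zero hq, ← hpq, ← eq_C_of_natDegree_le_zero hp]
  | succ m ih =>
    obtain ⟨p, hpW, hp, hpq⟩ := (AddSubgroup.eq_top_iff' _).1 hm (q.coeff (m + 1))
    have hqp : q - p ∈ W := ih (topCoeffs_eq_top_of_succ hW hm)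
      (natDegree_sub_le_of_coeff_eq hq hp hpq.symm)
    simpa using W.add_mem hqp hpW

theorem continuous_coeff_of_natDegree_le {X : Type*} [TopologicalSpace X] [TopologicalSpace K]
    [IsTopologicalRing K] {n : ℕ} {P : X → K[X]} (hdeg : ∀ u, (P u).natDegree ≤ n)
    (heval : ∀ x, Continuous fun u => (P u).eval x) (j : ℕ) :
    Continuous fun u => (P u).coeff j := by
  classical
  have hP (u : X) : P u = Lagrange.interpolate univ (fun i : Fin (n + 1) => (i : K))
      (fun i => (P u).eval (i : K)) :=
    Lagrange.eq_interpolate (Nat.cast_injective.comp Fin.val_injective).injOn <| by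
      rw [card_univ, Fintype.card_fin]
      exact (degree_le_natDegree.trans (WithBot.coe_le_coe.2 (hdeg u))).trans_lt
        (WithBot.coe_lt_coe.2 n.lt_succ_self)
  have hcoeff : (fun u => (P u).coeff j) = fun u => ∑ i : Fin (n + 1),
      (P u).eval (i : K) * (Lagrange.basis univ (fun i : Fin (n + 1) => (i : K)) i).coeff j := by
    funext u
    conv_lhs => rw [hP u]
    simp only [Lagrange.interpolate_apply, finsetSum_coeff, coeff_C_mul]
  rw [hcoeff]
  exact continuous_finsetSum _ fun i _ => (heval _).mul continuous_const

end Polynomial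

theorem AddSubgroup.eq_top_of_isPreconnected_subset (H : AddSubgroup ℝ) {S : Set ℝ}
    (hS : IsPreconnected S) (hSH : S ⊆ H) (h0 : 0 ∈ S) {δ : ℝ} (hδS : δ ∈ S) (hδ : δ ≠ 0) :
    H = ⊤ := by
  have hsub : Set.uIcc 0 δ ⊆ H := (hS.ordConnected.uIcc_subset h0 hδS).trans hSH
  have hnhds : (H : Set ℝ) ∈ nhds 0 := by
    refine Filter.mem_of_superset (Icc_mem_nhds (neg_lt_zero.2 (abs_pos.2 hδ)) (abs_pos.2 hδ)) ?_
    intro x hx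
    obtain h | h : x ∈ Set.uIcc 0 δ ∨ -x ∈ Set.uIcc 0 δ := by
      simp only [Set.mem_Icc, Set.mem_uIcc] at hx ⊢
      cases abs_cases δ <;> grind
    · exact hsub h
    · simpa using H.neg_mem (hsub h)
  have hopen := H.isOpen_of_mem_nhds hnhds
  exact SetLike.coe_injective
    (IsClopen.eq_univ ⟨H.isClosed_of_isOpen hopen, hopen⟩ ⟨0, H.zero_mem⟩)

theorem exists_map_add_ne_of_not_linear {w : ℝ → ℝ} (hw : Continuous w)
    (hlin : ¬∃ c : ℝ, ∀ u, w u = c * u) : ∃ a b, w (a + b) ≠ w a + w b := by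
  by_contra! h
  exact hlin ⟨w 1, fun u => by simpa [mul_comm] using map_real_smul (AddMonoidHom.mk' w h) hw u 1⟩

namespace LoopShear

section Shear

variable {A B : Type*} [AddCommGroup A] [AddCommGroup B]

def shear (c : A) (q : A → B) : Equiv.Perm (A × B) where
  toFun z := (z.1 + c, z.2 + q z.1)
  invFun z := (z.1 - c, z.2 - q (z.1 - c))
  left_inv z := by simp
  right_inv z := by simp

@[simp]
theorem shear_apply (c : A) (q : A → B) (z : A × B) : shear c q z = (z.1 + c, z.2 + q z.1) :=
  rfl

theorem shear_zero_zero : shear (0 : A) (fun _ => (0 : B)) = 1 :=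
  Equiv.ext fun z => by simp

theorem shear_mul_shear (c d : A) (q r : A → B) :
    shear c q * shear d r = shear (d + c) (fun x => r x + q (x + d)) :=
  Equiv.ext fun z => by simp [add_assoc]

theorem shear_inv (c : A) (q : A → B) : (shear c q)⁻¹ = shear (-c) (fun x => -q (x - c)) :=
  inv_eq_of_mul_eq_one_right <| Equiv.ext fun z => by simp [sub_eq_add_neg]

theorem shear_inv_mul_shear (c : A) (q r : A → B) :
    (shear c q)⁻¹ * shear c r = shear 0 (fun x => r x - q x) := by
  rw [shear_inv, shear_mul_shear]
  simp [sub_eq_add_neg, add_comm]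

theorem shear_mul_shear_zero_mul_inv (d : A) (q r : A → B) :
    shear d r * shear 0 q * (shear d r)⁻¹ = shear 0 (fun x => q (x - d)) := by
  refine Equiv.ext fun z => ?_
  simp [shear_inv, sub_eq_add_neg]
  abel

end Shear

variable {n : ℕ}

-- The index `k : Fin n` stands for the exponent `k + 1` of the statement.
def altSum (w : Fin n → ℝ) (x : ℝ) : ℝ :=
  ∑ k : Fin n, (-1 : ℝ) ^ ((k : ℕ) + 1) * x ^ ((k : ℕ) + 1) * w k

noncomputable def altPoly (w : Fin n → ℝ) : ℝ[X] :=
  ∑ k : Fin n, C ((-1 : ℝ) ^ ((k : ℕ) + 1) * w k) * X ^ ((k : ℕ) + 1)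

theorem eval_altPoly (w : Fin n → ℝ) (x : ℝ) : (altPoly w).eval x = altSum w x := by
  simp only [altPoly, altSum, eval_finsetSum, eval_mul, eval_C, eval_pow, eval_X]
  exact sum_congr rfl fun k _ => by ring

theorem natDegree_altPoly_le (w : Fin n → ℝ) : (altPoly w).natDegree ≤ n :=
  natDegree_sum_le_of_forall_le _ _ fun k _ => (natDegree_C_mul_X_pow_le _ _).trans k.isLt

theorem coeff_altPoly (w : Fin n → ℝ) (k : Fin n) :
    (altPoly w).coeff (k + 1) = (-1) ^ ((k : ℕ) + 1) * w k := by
  simp only [altPoly, finsetSum_coeff, coeff_C_mul_X_pow, add_left_inj, Fin.val_inj, sum_ite_eq,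
    mem_univ, if_true]

theorem eval_eq_altSum_coeff {p : ℝ[X]} (hp : p.natDegree ≤ n) (h0 : p.coeff 0 = 0) (x : ℝ) :
    p.eval x = altSum (fun k : Fin n => (-1) ^ ((k : ℕ) + 1) * p.coeff (k + 1)) x := by
  rw [eval_eq_sum_range' (Nat.lt_succ_of_le hp), sum_range_succ', h0, altSum,
    Fin.sum_univ_eq_sum_range
      (fun k => (-1 : ℝ) ^ (k + 1) * x ^ (k + 1) * ((-1) ^ (k + 1) * p.coeff (k + 1)))]
  simp only [zero_mul, add_zero]
  refine sum_congr rfl fun k _ => ?_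
  rw [mul_mul_mul_comm, ← pow_add, Even.neg_one_pow ⟨_, rfl⟩, one_mul, mul_comm]

def loopMul (v : Fin n → ℝ → ℝ) (a b : ℝ × ℝ) : ℝ × ℝ :=
  (a.1 + b.1, a.2 + b.2 + altSum (fun i => v i a.1) b.1)

def translationGroup (v : Fin n → ℝ → ℝ) : Subgroup (Equiv.Perm (ℝ × ℝ)) :=
  Subgroup.closure ({f | ∃ a, ∀ x, f x = loopMul v a x} ∪ {f | ∃ a, ∀ x, f x = loopMul v x a})

def leftTranslation (v : Fin n → ℝ → ℝ) (a : ℝ × ℝ) : Equiv.Perm (ℝ × ℝ) :=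
  shear a.1 fun x => a.2 + altSum (fun k => v k a.1) x

def rightTranslation (v : Fin n → ℝ → ℝ) (a : ℝ × ℝ) : Equiv.Perm (ℝ × ℝ) :=
  shear a.1 fun x => a.2 + altSum (fun k => v k x) a.1

theorem leftTranslation_apply (v : Fin n → ℝ → ℝ) (a z : ℝ × ℝ) :
    leftTranslation v a z = loopMul v a z :=
  Prod.ext (add_comm _ _) (by simp only [leftTranslation, shear_apply, loopMul]; ring)

theorem rightTranslation_apply (v : Fin n → ℝ → ℝ) (a z : ℝ × ℝ) :
    rightTranslation v a z = loopMul v z a :=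
  Prod.ext rfl (by simp only [rightTranslation, shear_apply, loopMul]; ring)

theorem leftTranslation_mem (v : Fin n → ℝ → ℝ) (a : ℝ × ℝ) :
    leftTranslation v a ∈ translationGroup v :=
  Subgroup.subset_closure (Or.inl ⟨a, leftTranslation_apply v a⟩)

theorem rightTranslation_mem (v : Fin n → ℝ → ℝ) (a : ℝ × ℝ) :
    rightTranslation v a ∈ translationGroup v :=
  Subgroup.subset_closure (Or.inr ⟨a, rightTranslation_apply v a⟩)

variable (n) in
noncomputable def shearGroup : Subgroup (Equiv.Perm (ℝ × ℝ)) where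
  carrier := {f | ∃ c, ∃ p : ℝ[X], p.natDegree ≤ n ∧ f = shear c p.eval}
  one_mem' := ⟨0, 0, by simp, by simp [shear_zero_zero]⟩
  mul_mem' := by
    rintro _ _ ⟨c, p, hp, rfl⟩ ⟨d, r, hr, rfl⟩
    refine ⟨d + c, r + taylor d p,
      natDegree_add_le_of_degree_le hr (by rwa [natDegree_taylor]), ?_⟩
    simp [shear_mul_shear, taylor_eval]
  inv_mem' := by
    rintro _ ⟨c, p, hp, rfl⟩
    refine ⟨-c, -taylor (-c) p, by rwa [natDegree_neg, natDegree_taylor], ?_⟩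
    simp [shear_inv, taylor_eval, sub_eq_add_neg]

theorem coe_shearGroup : (shearGroup n : Set (Equiv.Perm (ℝ × ℝ))) =
    {f : Equiv.Perm (ℝ × ℝ) | ∃ c : ℝ, ∃ p : Polynomial ℝ, p.natDegree ≤ n ∧
      ∀ x y : ℝ, f (x, y) = (x + c, y + p.eval x)} := by
  ext f
  refine exists_congr fun c => exists_congr fun p => and_congr_right fun _ => ?_
  exact ⟨by rintro rfl x y; rfl, fun h => Equiv.ext fun z => h z.1 z.2⟩

theorem exists_polynomial_of_shear_mem {c : ℝ} {q : ℝ → ℝ} (h : shear c q ∈ shearGroup n) :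
    ∃ p : ℝ[X], p.natDegree ≤ n ∧ ∀ x, q x = p.eval x := by
  obtain ⟨d, p, hp, he⟩ := h
  exact ⟨p, hp, fun x => by simpa using congrArg (fun f => (f (x, 0)).2) he⟩

theorem translationGroup_le_shearGroup {v s : Fin n → ℝ → ℝ}
    (hs : ∀ x u,
      altSum (fun k => s k u) x + altSum (fun k => v k u) x = altSum (fun k => v k x) u) :
    translationGroup v ≤ shearGroup n := by
  refine (Subgroup.closure_le _).2 ?_
  rintro f (⟨a, hf⟩ | ⟨a, hf⟩)
  · obtain rfl : f = leftTranslation v a :=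
      Equiv.ext fun z => (hf z).trans (leftTranslation_apply v a z).symm
    refine ⟨a.1, C a.2 + altPoly (fun k => v k a.1),
      natDegree_add_le_of_degree_le (by simp) (natDegree_altPoly_le _), ?_⟩
    simp [leftTranslation, eval_altPoly]
  · obtain rfl : f = rightTranslation v a :=
      Equiv.ext fun z => (hf z).trans (rightTranslation_apply v a z).symm
    refine ⟨a.1, C a.2 + (altPoly (fun k => s k a.1) + altPoly (fun k => v k a.1)),
      natDegree_add_le_of_degree_le (by simp)
        (natDegree_add_le_of_degree_le (natDegree_altPoly_le _) (natDegree_altPoly_le _)), ?_⟩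
    simp [rightTranslation, eval_altPoly, hs]

theorem exists_continuous_of_forall_polynomial {v : Fin n → ℝ → ℝ} (hv0 : ∀ i, v i 0 = 0)
    (hvc : ∀ i, Continuous (v i))
    (hpoly : ∀ u, ∃ p : ℝ[X], p.natDegree ≤ n ∧ ∀ x, altSum (fun k => v k x) u = p.eval x) :
    ∃ s : Fin n → ℝ → ℝ, (∀ k, Continuous (s k)) ∧ ∀ x u,
      altSum (fun k => s k u) x + altSum (fun k => v k u) x = altSum (fun k => v k x) u := by
  choose P hP hPeval using hpoly
  have hP0 (u : ℝ) : (P u).coeff 0 = 0 := by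
    rw [coeff_zero_eq_eval_zero, ← hPeval]
    simp [altSum, hv0]
  have hcont (j : ℕ) : Continuous fun u => (P u).coeff j :=
    continuous_coeff_of_natDegree_le hP (fun x => by simp_rw [← hPeval]; unfold altSum; fun_prop) j
  refine ⟨fun k u => (-1) ^ ((k : ℕ) + 1) * (P u).coeff (k + 1) - v k u,
    fun k => (continuous_const.mul (hcont _)).sub (hvc k), fun x u => ?_⟩
  rw [hPeval u x, eval_eq_altSum_coeff (hP u) (hP0 u), altSum, altSum, altSum, ← sum_add_distrib]
  exact sum_congr rfl fun k _ => by ring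

-- `λ_(a+b,0)⁻¹ λ_(b,0) λ_(a,0)` is the vertical shear by this polynomial.
variable (v : Fin n → ℝ → ℝ) in
noncomputable def defectPoly (a b : ℝ) : ℝ[X] :=
  altPoly (fun k => v k a) + taylor a (altPoly fun k => v k b) - altPoly (fun k => v k (a + b))

variable {v : Fin n → ℝ → ℝ}

theorem natDegree_defectPoly_le (a b : ℝ) : (defectPoly v a b).natDegree ≤ n :=
  (natDegree_sub_le_of_le (natDegree_add_le_of_degree_le (natDegree_altPoly_le _)
    (by rw [natDegree_taylor]; exact natDegree_altPoly_le _)) (natDegree_altPoly_le _)).trans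
    (max_self n).le

theorem coeff_defectPoly_of_add_one_eq {k : Fin n} (hk : (k : ℕ) + 1 = n) (a b : ℝ) :
    (defectPoly v a b).coeff (k + 1) = (-1) ^ ((k : ℕ) + 1) * (v k a + v k b - v k (a + b)) := by
  rw [defectPoly, coeff_sub, coeff_add,
    coeff_taylor_of_natDegree_le ((natDegree_altPoly_le _).trans hk.ge),
    coeff_altPoly, coeff_altPoly, coeff_altPoly]
  ring

section PolyShears

variable (G : Subgroup (Equiv.Perm (ℝ × ℝ)))

def polyShears : AddSubgroup ℝ[X] where
  carrier := {p | shear 0 p.eval ∈ G}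
  zero_mem' := by simp [shear_zero_zero]
  add_mem' := by
    intro p q hp hq
    have h : shear 0 (p + q).eval = shear 0 q.eval * shear 0 p.eval := by
      simp [shear_mul_shear]
    change shear 0 _ ∈ G
    rw [h]
    exact G.mul_mem hq hp
  neg_mem' := by
    intro p hp
    have h : shear 0 (-p).eval = (shear 0 p.eval)⁻¹ := by simp [shear_inv]
    change shear 0 _ ∈ G
    rw [h]
    exact G.inv_mem hp

theorem mem_polyShears {p : ℝ[X]} : p ∈ polyShears G ↔ shear 0 p.eval ∈ G :=
  Iff.rfl

variable {G}

theorem taylor_mem_polyShears (hG : ∀ c : ℝ, ∃ r, shear c r ∈ G) (c : ℝ) {p : ℝ[X]}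
    (hp : p ∈ polyShears G) : taylor c p ∈ polyShears G := by
  obtain ⟨r, hr⟩ := hG (-c)
  have h := G.mul_mem (G.mul_mem hr hp) (G.inv_mem hr)
  rw [shear_mul_shear_zero_mul_inv] at h
  simpa [mem_polyShears, taylor_eval] using h

variable (hG : ∀ a, leftTranslation v a ∈ G)
include hG

theorem defectPoly_mem_polyShears (a b : ℝ) : defectPoly v a b ∈ polyShears G := by
  have h : (leftTranslation v (a + b, 0))⁻¹ *
      (leftTranslation v (b, 0) * leftTranslation v (a, 0)) = shear 0 (defectPoly v a b).eval := by
    simp only [leftTranslation, shear_mul_shear, shear_inv_mul_shear]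
    congr 1
    funext x
    simp [defectPoly, eval_altPoly, taylor_eval]
  rw [mem_polyShears, ← h]
  exact G.mul_mem (G.inv_mem (hG _)) (G.mul_mem (hG _) (hG _))

theorem topCoeffs_polyShears_eq_top (hv0 : ∀ i, v i 0 = 0) {k : Fin n} (hk : (k : ℕ) + 1 = n)
    (hwc : Continuous (v k)) (hvnl : ¬∃ c : ℝ, ∀ u : ℝ, v k u = c * u) :
    topCoeffs (polyShears G) (k + 1) = ⊤ := by
  obtain ⟨a, b, hab⟩ := exists_map_add_ne_of_not_linear hwc hvnl
  refine AddSubgroup.eq_top_of_isPreconnected_subset _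
    (S := Set.range fun ab : ℝ × ℝ => (defectPoly v ab.1 ab.2).coeff (k + 1))
    (isPreconnected_range ?_) ?_ ⟨(0, 0), ?_⟩ ⟨(a, b), rfl⟩ ?_
  · simp_rw [coeff_defectPoly_of_add_one_eq hk]
    fun_prop
  · rintro _ ⟨⟨a, b⟩, rfl⟩
    exact ⟨_, defectPoly_mem_polyShears hG a b, (natDegree_defectPoly_le a b).trans hk.ge, rfl⟩
  · simp [coeff_defectPoly_of_add_one_eq hk, hv0]
  · show (defectPoly v a b).coeff (k + 1) ≠ 0
    rw [coeff_defectPoly_of_add_one_eq hk]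
    exact mul_ne_zero (pow_ne_zero _ (by norm_num)) (sub_ne_zero.2 hab.symm)

theorem shearGroup_le (hv0 : ∀ i, v i 0 = 0) {k : Fin n} (hk : (k : ℕ) + 1 = n)
    (hwc : Continuous (v k)) (hvnl : ¬∃ c : ℝ, ∀ u : ℝ, v k u = c * u) :
    shearGroup n ≤ G := by
  rintro _ ⟨c, p, hp, rfl⟩
  have hW {q : ℝ[X]} (hq : q.natDegree ≤ n) : q ∈ polyShears G :=
    mem_of_topCoeffs_eq_top (fun c _ => taylor_mem_polyShears (fun c => ⟨_, hG (c, 0)⟩) c)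
      (topCoeffs_polyShears_eq_top hG hv0 hk hwc hvnl) (hq.trans hk.ge)
  set q := taylor (-c) (p - altPoly fun k => v k c)
  have h : shear c p.eval = shear 0 q.eval * leftTranslation v (c, 0) := by
    simp [q, leftTranslation, shear_mul_shear, taylor_eval, eval_altPoly]
  rw [h]
  refine G.mul_mem (hW ?_) (hG _)
  rw [natDegree_taylor]
  exact (natDegree_sub_le_of_le hp (natDegree_altPoly_le _)).trans (max_self n).le

end PolyShears

end LoopShear

open LoopShear

/-- Let `n ≥ 1` and let `v₁, …, vₙ : ℝ → ℝ` be continuous with `vᵢ(0) = 0` and `vₙ`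
non-linear, with the loop operation `∗` on `ℝ × ℝ` given by
`(u₁,z₁) ∗ (u₂,z₂) = (u₁+u₂, z₁+z₂ − u₂ v₁(u₁) + ⋯ + (−1)ⁿ u₂ⁿ vₙ(u₁))`.
The subgroup of `Perm (ℝ × ℝ)` generated by all left and right translations of
`∗` equals the group `Mₙ` of all permutations `(x, y) ↦ (x + c, y + p(x))` with
`c ∈ ℝ` and `p` a polynomial of degree at most `n`, iff there are continuous
functions `s₁, …, sₙ : ℝ → ℝ` with
`Σ_{k=1}^n (−1)ᵏ xᵏ sₖ(u) + Σ_{k=1}^n (−1)ᵏ xᵏ vₖ(u) = Σ_{k=1}^n (−1)ᵏ uᵏ vₖ(x)`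
for all `x, u ∈ ℝ` (one-based `(−1)ᵏ` appears zero-indexed as `(−1)^{k₀+1}`). -/
theorem stmt15
    (n : ℕ) (hn : 1 ≤ n)
    (v : Fin n → ℝ → ℝ) (hv0 : ∀ i, v i 0 = 0) (hvc : ∀ i, Continuous (v i))
    (hvnl : ¬∃ c : ℝ, ∀ u : ℝ, v ⟨n - 1, by omega⟩ u = c * u)
    (mul : ℝ × ℝ → ℝ × ℝ → ℝ × ℝ)
    (hmul : ∀ a b : ℝ × ℝ, mul a b =
      (a.1 + b.1,
        a.2 + b.2 + ∑ i : Fin n, (-1 : ℝ) ^ ((i : ℕ) + 1) * b.1 ^ ((i : ℕ) + 1) * v i a.1)) :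
    ((Subgroup.closure
        ({f : Equiv.Perm (ℝ × ℝ) | ∃ a : ℝ × ℝ, ∀ x, f x = mul a x} ∪
          {f : Equiv.Perm (ℝ × ℝ) | ∃ a : ℝ × ℝ, ∀ x, f x = mul x a}) :
        Subgroup (Equiv.Perm (ℝ × ℝ))) : Set (Equiv.Perm (ℝ × ℝ))) =
      {f : Equiv.Perm (ℝ × ℝ) | ∃ c : ℝ, ∃ p : Polynomial ℝ, p.natDegree ≤ n ∧
        ∀ x y : ℝ, f (x, y) = (x + c, y + p.eval x)} ↔
      ∃ s : Fin n → ℝ → ℝ, (∀ k, Continuous (s k)) ∧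
        ∀ x u : ℝ,
          (∑ k : Fin n, (-1 : ℝ) ^ ((k : ℕ) + 1) * x ^ ((k : ℕ) + 1) * s k u) +
            (∑ k : Fin n, (-1 : ℝ) ^ ((k : ℕ) + 1) * x ^ ((k : ℕ) + 1) * v k u) =
          ∑ k : Fin n, (-1 : ℝ) ^ ((k : ℕ) + 1) * u ^ ((k : ℕ) + 1) * v k x := by
  obtain rfl : mul = loopMul v := funext fun a => funext (hmul a)
  rw [← coe_shearGroup, SetLike.coe_set_eq]
  change translationGroup v = shearGroup n ↔ _
  constructor
  · intro h
    refine exists_continuous_of_forall_polynomial hv0 hvc fun u => ?_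
    obtain ⟨p, hp, hpu⟩ := exists_polynomial_of_shear_mem (h ▸ rightTranslation_mem v (u, 0))
    exact ⟨p, hp, fun x => by simpa using hpu x⟩
  · rintro ⟨s, -, hs⟩
    exact le_antisymm (translationGroup_le_shearGroup hs)
      (shearGroup_le (leftTranslation_mem v) hv0 (Nat.sub_add_cancel hn) (hvc _) hvnl)
end
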